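/- With P(v,j) as above, if G contains a Hamiltonian path π = (v_1 = s, ..., v_n = e) and the process performs the transitions (v_k → v_{k+1}) at slack k-1 in order k = 1, ..., n-1, then at the end π ∈ P(e, n-1). -/

import Mathlib

/-!
Induction along the Hamiltonian path: if the prefix `[v 1, …, v k]` lies in `P (v k) (k - 1)`,
then `v (k + 1)` does not occur in it because `v` is injective on `[1, n]`, so the transition
`v k → v (k + 1)` extends it to `[v 1, …, v (k + 1)] ∈ P (v (k + 1)) k`.
-/

def pathPrefix {V : Type*} (v : ℕ → V) (k : ℕ) : List V :=
  (List.range k).map (fun i => v (i + 1))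

section

variable {V : Type*} (v : ℕ → V)

theorem pathPrefix_one : pathPrefix v 1 = [v 1] := rfl

theorem pathPrefix_succ (k : ℕ) : pathPrefix v (k + 1) = pathPrefix v k ++ [v (k + 1)] := by
  simp [pathPrefix, List.range_succ]

theorem not_mem_pathPrefix {k : ℕ} (hinj : ∀ i, 1 ≤ i → i ≤ k → v i ≠ v (k + 1)) :
    v (k + 1) ∉ pathPrefix v k := by
  simp only [pathPrefix, List.mem_map, List.mem_range, not_exists, not_and]
  exact fun i hi => hinj (i + 1) (by omega) hi

theorem pathPrefix_mem_of_step (n : ℕ)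
    (hinj : ∀ i j, 1 ≤ i → i ≤ n → 1 ≤ j → j ≤ n → v i = v j → i = j)
    (P : V → ℕ → Set (List V)) (hbase : [v 1] ∈ P (v 1) 0)
    (hstep : ∀ k, 1 ≤ k → k < n → ∀ h ∈ P (v k) (k - 1),
      v (k + 1) ∉ h → h ++ [v (k + 1)] ∈ P (v (k + 1)) k) :
    ∀ k, 1 ≤ k → k ≤ n → pathPrefix v k ∈ P (v k) (k - 1)
  | 0, h0, _ => absurd h0 (by omega)
  | 1, _, _ => by simpa [pathPrefix_one] using hbase
  | k + 2, _, hkn => by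
    have hfresh : v (k + 2) ∉ pathPrefix v (k + 1) :=
      not_mem_pathPrefix v fun i hi hik hvi => by
        have := hinj i (k + 2) hi (by omega) (by omega) hkn hvi
        omega
    rw [pathPrefix_succ]
    exact hstep (k + 1) (by omega) hkn _
      (pathPrefix_mem_of_step n hinj P hbase hstep (k + 1) (by omega) (by omega)) hfresh

end

theorem stmt14_general {V : Type*}
    (s e : V) (n : ℕ) (hpos : 1 ≤ n)
    (v : ℕ → V) (hs : v 1 = s) (he : v n = e)
    (hinj : ∀ i j, 1 ≤ i → i ≤ n → 1 ≤ j → j ≤ n → v i = v j → i = j)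
    (P : V → ℕ → Set (List V))
    (hbase : [s] ∈ P s 0)
    (hstep : ∀ k, 1 ≤ k → k < n → ∀ h ∈ P (v k) (k - 1),
      v (k + 1) ∉ h → h ++ [v (k + 1)] ∈ P (v (k + 1)) k) :
    ((List.range n).map (fun i => v (i + 1))) ∈ P e (n - 1) := by
  subst hs he
  exact pathPrefix_mem_of_step v n hinj P hbase hstep n hpos le_rfl

/-- If `G` contains a Hamiltonian path `π = (v 1 = s, ..., v n = e)`
and the process performs the transitions `v k → v (k+1)` at slack `k - 1` in
order, then at the end `π ∈ P e (n - 1)`. -/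
theorem stmt14 {V : Type*} [Fintype V]
    (E : V → V → Prop) (s e : V) (n : ℕ) (hpos : 1 ≤ n)
    (hn : Fintype.card V = n)
    (v : ℕ → V) (hs : v 1 = s) (he : v n = e)
    (hinj : ∀ i j, 1 ≤ i → i ≤ n → 1 ≤ j → j ≤ n → v i = v j → i = j)
    (hsurj : ∀ x : V, ∃ k, 1 ≤ k ∧ k ≤ n ∧ v k = x)
    (hedge : ∀ k, 1 ≤ k → k < n → E (v k) (v (k + 1)))
    (P : V → ℕ → Set (List V))
    (hbase : [s] ∈ P s 0)
    (hstep : ∀ k, 1 ≤ k → k < n → ∀ h ∈ P (v k) (k - 1),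
      v (k + 1) ∉ h → h ++ [v (k + 1)] ∈ P (v (k + 1)) k) :
    ((List.range n).map (fun i => v (i + 1))) ∈ P e (n - 1) :=
  stmt14_general s e n hpos v hs he hinj P hbase hstep
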